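/- Let D = (V, A) be a finite digraph, let k ≥ 1 and w ≥ 1 be integers, and let X ⊆ V be a set whose deletion leaves an acyclic digraph each of whose weakly connected components has at most w vertices. Call two weak components C, C' of D − X equivalent if there is a digraph isomorphism from C to C' such that each vertex and its image have the same set of in-neighbors in X and the same set of out-neighbors in X. Let D' be an induced subdigraph of D obtained by keeping X together with, for each equivalence class, all of its components if the class has at most kw + 1 components, and exactly kw + 1 of its components otherwise. Then cn(D) ≤ k if and only if cn(D') ≤ k. -/

import Mathlib

open scoped Classical

/-- The robber territories for the subdigraph of `D` induced by a vertex set `S`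
(0-indexed: `terrOn A S W i` is the paper's `R_{i+1}` of the game on `D[S]`). -/
noncomputable def terrOn {V : Type} [Fintype V] [DecidableEq V]
    (A : V → V → Prop) (S : Finset V) (W : ℕ → Finset V) : ℕ → Finset V
  | 0 => S \ W 0
  | i + 1 => (S.filter (fun y => ∃ x ∈ terrOn A S W i, A x y)) \ W (i + 1)

/-- A cop strategy uses at most `k` cops. -/
def UsesAtMost {V : Type} (W : ℕ → Finset V) (k : ℕ) : Prop :=
  ∀ i, (W i).card ≤ k

/-- The cop number of the subdigraph of `D` induced by the vertex set `S`. -/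
noncomputable def copNumberOn {V : Type} [Fintype V] [DecidableEq V]
    (A : V → V → Prop) (S : Finset V) : ℕ :=
  sInf {k | ∃ W : ℕ → Finset V, UsesAtMost W k ∧ ∃ t, terrOn A S W t = ∅}

/-- The subdigraph induced by `S` is acyclic (loops count as cycles): no vertex of
`S` lies on a directed cycle inside `S`. -/
def AcyclicOn {V : Type} (A : V → V → Prop) (S : Finset V) : Prop :=
  ∀ v ∈ S, ¬ Relation.TransGen (fun x y => x ∈ S ∧ y ∈ S ∧ A x y) v v

/-- The weakly connected component of `v` in the subdigraph induced by `S`. -/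
noncomputable def weakComponent {V : Type} [Fintype V] [DecidableEq V]
    (A : V → V → Prop) (S : Finset V) (v : V) : Finset V :=
  S.filter (fun u => Relation.ReflTransGen (fun x y => x ∈ S ∧ y ∈ S ∧ (A x y ∨ A y x)) v u)

/-- Two components `C`, `C'` (subsets of `V \ X`) are equivalent: there is a digraph
isomorphism from `C` onto `C'` such that each vertex and its image have the same
in-neighbors and the same out-neighbors in `X`. -/
def ComponentEquiv {V : Type} [DecidableEq V] (A : V → V → Prop) (X : Finset V)
    (C C' : Finset V) : Prop :=
  ∃ φ : V → V, Set.InjOn φ ↑C ∧ C.image φ = C' ∧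
    (∀ u ∈ C, ∀ v ∈ C, (A u v ↔ A (φ u) (φ v))) ∧
    (∀ u ∈ C, ∀ x ∈ X, (A x u ↔ A x (φ u)) ∧ (A u x ↔ A (φ u) x))

/-!
A winning strategy on `D'` wins on `D` as well. A robber who leaves `X` for a discarded
component `C` is shadowed by a robber in a kept component `C'` equivalent to `C`, moving along
the image of his path under the equivalence. Since `D - X` is acyclic, he can stay in `C` for at
most `w` rounds, during which at most `k * w` vertices are ever guarded; among the `k * w + 1`
kept copies of `C` one is therefore cop-free for that whole time, and the shadow lives there.
Every move of the robber in `D` is matched by a legal move of the shadow in `D'`, so the robber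
is caught no later than his shadow.
-/

open Finset

section
variable {V : Type} [DecidableEq V]

structure IsHomOver (A : V → V → Prop) (X C C' : Finset V) (φ : V → V) : Prop where
  mapsTo : ∀ u ∈ C, φ u ∈ C'
  map_adj : ∀ u ∈ C, ∀ v ∈ C, A u v → A (φ u) (φ v)
  map_adj_from : ∀ x ∈ X, ∀ u ∈ C, A x u → A x (φ u)
  map_adj_to : ∀ u ∈ C, ∀ x ∈ X, A u x → A (φ u) x

lemma ComponentEquiv.refl (A : V → V → Prop) (X C : Finset V) : ComponentEquiv A X C C :=
  ⟨id, Set.injOn_id _, image_id, fun _ _ _ _ => Iff.rfl, fun _ _ _ _ => ⟨Iff.rfl, Iff.rfl⟩⟩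

lemma ComponentEquiv.exists_isHomOver {A : V → V → Prop} {X C C' : Finset V}
    (h : ComponentEquiv A X C C') : ∃ φ, IsHomOver A X C C' φ := by
  obtain ⟨φ, -, himage, hadj, hX⟩ := h
  exact ⟨φ, ⟨fun u hu => himage ▸ mem_image_of_mem φ hu, fun u hu v hv => (hadj u hu v hv).1,
    fun x hx u hu => (hX u hu x hx).1.1, fun u hu x hx => (hX u hu x hx).2.1⟩⟩

lemma exists_disjoint_of_card_lt {F : Finset (Finset V)}
    (hF : (F : Set (Finset V)).PairwiseDisjoint id) {B : Finset V} (h : B.card < F.card) :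
    ∃ C ∈ F, Disjoint C B := by
  by_contra! hmeet
  have hmeet' : (F : Set (Finset V)).PairwiseDisjoint (· ∩ B) :=
    hF.mono fun C => inter_subset_left
  refine h.not_ge ?_
  calc F.card = ∑ _C ∈ F, 1 := by simp
    _ ≤ ∑ C ∈ F, (C ∩ B).card :=
      sum_le_sum fun C hC => card_pos.2 (not_disjoint_iff_nonempty_inter.1 (hmeet C hC))
    _ = (F.biUnion (· ∩ B)).card := (card_biUnion hmeet').symm
    _ ≤ B.card := card_le_card (biUnion_subset.2 fun _ _ => inter_subset_right)

lemma card_biUnion_Ico_le {W : ℕ → Finset V} {k : ℕ} (hW : UsesAtMost W k) (a m : ℕ) :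
    ((Ico a (a + m)).biUnion W).card ≤ m * k :=
  calc _ ≤ ∑ j ∈ Ico a (a + m), (W j).card := card_biUnion_le
    _ ≤ ∑ _j ∈ Ico a (a + m), k := sum_le_sum fun j _ => hW j
    _ = m * k := by simp

end

section
variable {V : Type} [Fintype V] (A : V → V → Prop)

noncomputable def reachSet (S : Finset V) (v : V) : Finset V :=
  univ.filter (Relation.ReflTransGen (fun x y => x ∈ S ∧ y ∈ S ∧ A x y) v)

lemma self_mem_reachSet (S : Finset V) (v : V) : v ∈ reachSet A S v :=
  mem_filter.2 ⟨mem_univ v, .refl⟩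

lemma card_reachSet_lt_of_adj {S : Finset V} (hS : AcyclicOn A S) {u v : V} (hu : u ∈ S)
    (hv : v ∈ S) (h : A u v) : (reachSet A S v).card < (reachSet A S u).card := by
  refine card_lt_card ⟨fun x hx => mem_filter.2 ⟨mem_univ x, .head ⟨hu, hv, h⟩ (mem_filter.1 hx).2⟩,
    fun hsub => hS u hu ?_⟩
  exact .head' ⟨hu, hv, h⟩ (mem_filter.1 (hsub (self_mem_reachSet A S u))).2

end

section
variable {V : Type} [Fintype V] [DecidableEq V] (A : V → V → Prop)

lemma mem_terrOn_zero {S : Finset V} {W : ℕ → Finset V} {v : V} :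
    v ∈ terrOn A S W 0 ↔ v ∈ S ∧ v ∉ W 0 := by
  rw [terrOn, mem_sdiff]

lemma mem_terrOn_succ {S : Finset V} {W : ℕ → Finset V} {i : ℕ} {v : V} :
    v ∈ terrOn A S W (i + 1) ↔ v ∈ S ∧ (∃ u ∈ terrOn A S W i, A u v) ∧ v ∉ W (i + 1) := by
  rw [terrOn, mem_sdiff, mem_filter, and_assoc]

lemma terrOn_mono {S T : Finset V} (h : S ⊆ T) (W : ℕ → Finset V) (i : ℕ) :
    terrOn A S W i ⊆ terrOn A T W i := by
  induction i with
  | zero =>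
    intro v
    simp only [mem_terrOn_zero]
    exact And.imp_left (@h v)
  | succ i ih =>
    intro v
    simp only [mem_terrOn_succ]
    rintro ⟨hv, ⟨u, hu, huv⟩, hvW⟩
    exact ⟨h hv, ⟨u, ih hu, huv⟩, hvW⟩

lemma copNumberOn_le_iff {S : Finset V} {k : ℕ} :
    copNumberOn A S ≤ k ↔ ∃ W : ℕ → Finset V, UsesAtMost W k ∧ ∃ t, terrOn A S W t = ∅ := by
  refine ⟨fun h => ?_, fun h => Nat.sInf_le h⟩
  have hguardAll : {m | ∃ W : ℕ → Finset V, UsesAtMost W m ∧ ∃ t, terrOn A S W t = ∅}.Nonempty :=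
    ⟨Fintype.card V, fun _ => univ, fun _ => le_rfl, 0, by simp [terrOn]⟩
  obtain ⟨W, hW, t, ht⟩ := Nat.sInf_mem hguardAll
  exact ⟨W, fun i => (hW i).trans h, t, ht⟩

lemma copNumberOn_mono {S T : Finset V} (h : S ⊆ T) : copNumberOn A S ≤ copNumberOn A T := by
  obtain ⟨W, hW, t, ht⟩ := (copNumberOn_le_iff A).1 (le_refl (copNumberOn A T))
  exact (copNumberOn_le_iff A).2 ⟨W, hW, t, subset_empty.1 (ht ▸ terrOn_mono A h W t)⟩

lemma mem_weakComponent_self {S : Finset V} {v : V} (hv : v ∈ S) : v ∈ weakComponent A S v :=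
  mem_filter.2 ⟨hv, .refl⟩

lemma weakComponent_eq_of_mem {S : Finset V} {u v : V} (h : u ∈ weakComponent A S v) :
    weakComponent A S u = weakComponent A S v := by
  obtain ⟨-, hvu⟩ := mem_filter.1 h
  have : Std.Symm (fun x y => x ∈ S ∧ y ∈ S ∧ (A x y ∨ A y x)) :=
    ⟨fun _ _ ⟨hx, hy, hxy⟩ => ⟨hy, hx, hxy.symm⟩⟩
  ext x
  simp only [weakComponent, mem_filter]
  exact and_congr_right fun _ => ⟨hvu.trans, (Std.Symm.symm _ _ hvu).trans⟩

lemma weakComponent_eq_of_adj {S : Finset V} {u v : V} (hu : u ∈ S) (hv : v ∈ S) (h : A u v) :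
    weakComponent A S u = weakComponent A S v :=
  weakComponent_eq_of_mem A (mem_filter.2 ⟨hu, .single ⟨hv, hu, Or.inr h⟩⟩)

lemma pairwiseDisjoint_weakComponent (S : Finset V) :
    (↑(S.image (weakComponent A S)) : Set (Finset V)).PairwiseDisjoint id := by
  rw [coe_image]
  rintro _ ⟨u, -, rfl⟩ _ ⟨v, -, rfl⟩ hne
  refine disjoint_left.2 fun x hxu hxv => hne ?_
  rw [← weakComponent_eq_of_mem A hxu, ← weakComponent_eq_of_mem A hxv]

lemma reachSet_subset_weakComponent {S : Finset V} {v : V} (hv : v ∈ S) :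
    reachSet A S v ⊆ weakComponent A S v := by
  intro x hx
  have hvx := (mem_filter.1 hx).2
  have hxS : x ∈ S := by
    rcases hvx.cases_tail with rfl | ⟨y, -, -, hxS, -⟩
    exacts [hv, hxS]
  exact mem_filter.2 ⟨hxS, Relation.ReflTransGen.mono (fun a b ⟨ha, hb, hab⟩ => ⟨ha, hb, Or.inl hab⟩) _ _ hvx⟩

end

section
variable {V : Type} [Fintype V] [DecidableEq V] {A : V → V → Prop} {X : Finset V}
  {Keep : Finset (Finset V)}

def IsKernelSelection (A : V → V → Prop) (X : Finset V) (m : ℕ) (Keep : Finset (Finset V)) :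
    Prop :=
  Keep ⊆ (univ \ X).image (weakComponent A (univ \ X)) ∧
    ∀ C ∈ (univ \ X).image (weakComponent A (univ \ X)),
      (Keep.filter (fun C' => ComponentEquiv A X C C')).card =
        min ((((univ \ X).image (weakComponent A (univ \ X))).filter
          (fun C' => ComponentEquiv A X C C')).card) m

lemma mem_kernel_iff (hKeep : Keep ⊆ (univ \ X).image (weakComponent A (univ \ X))) {v : V}
    (hv : v ∉ X) : v ∈ X ∪ Keep.biUnion id ↔ weakComponent A (univ \ X) v ∈ Keep := by
  simp only [mem_union, hv, false_or, mem_biUnion, id]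
  constructor
  · rintro ⟨C, hC, hvC⟩
    obtain ⟨u, -, rfl⟩ := mem_image.1 (hKeep hC)
    rwa [weakComponent_eq_of_mem A hvC]
  · exact fun h => ⟨_, h, mem_weakComponent_self A (by simpa)⟩

lemma mem_kernel_iff_of_adj (hKeep : Keep ⊆ (univ \ X).image (weakComponent A (univ \ X)))
    {u v : V} (hu : u ∉ X) (hv : v ∉ X) (h : A u v) :
    u ∈ X ∪ Keep.biUnion id ↔ v ∈ X ∪ Keep.biUnion id := by
  rw [mem_kernel_iff hKeep hu, mem_kernel_iff hKeep hv,
    weakComponent_eq_of_adj A (by simpa) (by simpa) h]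

lemma card_filter_componentEquiv_of_notMem_kernel {m : ℕ} (hsel : IsKernelSelection A X m Keep)
    {v : V} (hv : v ∉ X ∪ Keep.biUnion id) :
    (Keep.filter (fun C' => ComponentEquiv A X (weakComponent A (univ \ X) v) C')).card = m := by
  obtain ⟨hKeep, hcount⟩ := hsel
  have hvX : v ∉ X := fun h => hv (mem_union_left _ h)
  set C := weakComponent A (univ \ X) v
  have hC : C ∈ (univ \ X).image (weakComponent A (univ \ X)) :=
    mem_image_of_mem _ (by simpa)
  have hCKeep : C ∉ Keep := by rwa [← mem_kernel_iff hKeep hvX]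
  rw [hcount C hC, min_eq_right]
  by_contra! hsmall
  -- a class with at most `m` members is kept entirely, `C` included
  have hall := eq_of_subset_of_card_le (filter_subset_filter _ hKeep)
    (by rw [hcount C hC, min_eq_left hsmall.le])
  exact hCKeep (mem_filter.1 (hall ▸ mem_filter.2 ⟨hC, ComponentEquiv.refl A X C⟩)).1

lemma exists_keep_componentEquiv_disjoint {k w : ℕ} (hsel : IsKernelSelection A X (k * w + 1) Keep)
    {W : ℕ → Finset V} (hW : UsesAtMost W k) {v : V} (hv : v ∉ X ∪ Keep.biUnion id) {m : ℕ}
    (hm : m ≤ w) (a : ℕ) :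
    ∃ C' ∈ Keep, ComponentEquiv A X (weakComponent A (univ \ X) v) C' ∧
      ∀ j ∈ Ico a (a + m), Disjoint C' (W j) := by
  set F := Keep.filter (fun C' => ComponentEquiv A X (weakComponent A (univ \ X) v) C')
  have hF : (F : Set (Finset V)).PairwiseDisjoint id :=
    (pairwiseDisjoint_weakComponent A _).subset (coe_subset.2 (filter_subset _ _ |>.trans hsel.1))
  have hcops : ((Ico a (a + m)).biUnion W).card < F.card := by
    rw [card_filter_componentEquiv_of_notMem_kernel hsel hv]
    have := card_biUnion_Ico_le hW a m
    have := Nat.mul_le_mul_right k hm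
    lia
  obtain ⟨C', hC', hfree⟩ := exists_disjoint_of_card_lt hF hcops
  exact ⟨C', (mem_filter.1 hC').1, (mem_filter.1 hC').2, (disjoint_biUnion_right _ _ _).1 hfree⟩

end

section
variable {V : Type} [Fintype V] [DecidableEq V] {A : V → V → Prop} {X : Finset V}
  {Keep : Finset (Finset V)} {W : ℕ → Finset V}

/-- Since `D - X` is acyclic, `reachSet` bounds the number of rounds the robber at `v` can still
spend in his component, so `C'` stays cop-free for as long as the shadow `φ v` is needed. -/
def Shadows (A : V → V → Prop) (X : Finset V) (Keep : Finset (Finset V)) (W : ℕ → Finset V)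
    (i : ℕ) (v : V) : Prop :=
  ∃ C' ∈ Keep, ∃ φ : V → V, IsHomOver A X (weakComponent A (univ \ X) v) C' φ ∧
    φ v ∈ terrOn A (X ∪ Keep.biUnion id) W i ∧
    ∀ j ∈ Ico i (i + (reachSet A (univ \ X) v).card), Disjoint C' (W j)

def Tracked (A : V → V → Prop) (X : Finset V) (Keep : Finset (Finset V)) (W : ℕ → Finset V)
    (i : ℕ) (v : V) : Prop :=
  (v ∈ X ∪ Keep.biUnion id → v ∈ terrOn A (X ∪ Keep.biUnion id) W i) ∧
    (v ∉ X ∪ Keep.biUnion id → Shadows A X Keep W i v)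

lemma shadows_of_enter {k w : ℕ} (hsel : IsKernelSelection A X (k * w + 1) Keep)
    (hsize : ∀ v ∈ univ \ X, (weakComponent A (univ \ X) v).card ≤ w) (hW : UsesAtMost W k)
    {i : ℕ} {v : V} (hv : v ∉ X ∪ Keep.biUnion id)
    (henter : ∀ y ∈ X ∪ Keep.biUnion id, y ∉ W i → (∀ x ∈ X, A x v → A x y) →
      y ∈ terrOn A (X ∪ Keep.biUnion id) W i) :
    Shadows A X Keep W i v := by
  have hvS : v ∈ univ \ X := by simpa using fun h => hv (mem_union_left _ h)
  obtain ⟨C', hC', hequiv, hfree⟩ := exists_keep_componentEquiv_disjoint hsel hW hv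
    ((card_le_card (reachSet_subset_weakComponent A hvS)).trans (hsize v hvS)) i
  obtain ⟨φ, hφ⟩ := hequiv.exists_isHomOver
  have hvC := mem_weakComponent_self A hvS
  have hφv := hφ.mapsTo v hvC
  have hi : i ∈ Ico i (i + (reachSet A (univ \ X) v).card) :=
    mem_Ico.2 ⟨le_rfl, by simpa using card_pos.2 ⟨v, self_mem_reachSet A _ v⟩⟩
  refine ⟨C', hC', φ, hφ, henter _ (mem_union_right _ (mem_biUnion.2 ⟨C', hC', hφv⟩))
    (disjoint_left.1 (hfree i hi) hφv) fun x hx hxv => hφ.map_adj_from x hx v hvC hxv, hfree⟩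

lemma tracked_succ {k w : ℕ} (hsel : IsKernelSelection A X (k * w + 1) Keep)
    (hacyc : AcyclicOn A (univ \ X))
    (hsize : ∀ v ∈ univ \ X, (weakComponent A (univ \ X) v).card ≤ w) (hW : UsesAtMost W k)
    {i : ℕ} {u v : V} (hu : Tracked A X Keep W i u) (huv : A u v) (hvW : v ∉ W (i + 1)) :
    Tracked A X Keep W (i + 1) v := by
  have notMem_X : ∀ y, y ∉ X ∪ Keep.biUnion id → y ∉ X := fun y hy h => hy (mem_union_left _ h)
  refine ⟨fun hvK => mem_terrOn_succ A |>.2 ⟨hvK, ?_, hvW⟩, fun hvK => ?_⟩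
  · by_cases huK : u ∈ X ∪ Keep.biUnion id
    · exact ⟨u, hu.1 huK, huv⟩
    · -- an arc leaving a discarded component ends in `X`
      have hvX : v ∈ X := by
        by_contra hvX
        exact huK ((mem_kernel_iff_of_adj hsel.1 (notMem_X u huK) hvX huv).2 hvK)
      obtain ⟨C', -, φ, hφ, hφu, -⟩ := hu.2 huK
      exact ⟨φ u, hφu, hφ.map_adj_to u (mem_weakComponent_self A (by simpa using notMem_X u huK))
        v hvX huv⟩
  · by_cases huK : u ∈ X ∪ Keep.biUnion id
    · have huX : u ∈ X := by
        by_contra huX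
        exact hvK ((mem_kernel_iff_of_adj hsel.1 huX (notMem_X v hvK) huv).1 huK)
      exact shadows_of_enter hsel hsize hW hvK fun y hyK hyW hy =>
        mem_terrOn_succ A |>.2 ⟨hyK, ⟨u, hu.1 huK, hy u huX huv⟩, hyW⟩
    · have huS : u ∈ univ \ X := by simpa using notMem_X u huK
      have hvS : v ∈ univ \ X := by simpa using notMem_X v hvK
      obtain ⟨C', hC', φ, hφ, hφu, hfree⟩ := hu.2 huK
      have hreach := card_reachSet_lt_of_adj A hacyc huS hvS huv
      have hcomp := weakComponent_eq_of_adj A huS hvS huv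
      rw [hcomp] at hφ
      have hφv := hφ.mapsTo v (mem_weakComponent_self A hvS)
      have hwindow : ∀ j ∈ Ico (i + 1) (i + 1 + (reachSet A (univ \ X) v).card),
          j ∈ Ico i (i + (reachSet A (univ \ X) u).card) := by
        intro j hj
        rw [mem_Ico] at hj ⊢
        lia
      have hi : i + 1 ∈ Ico (i + 1) (i + 1 + (reachSet A (univ \ X) v).card) :=
        mem_Ico.2 ⟨le_rfl, by simpa using card_pos.2 ⟨v, self_mem_reachSet A _ v⟩⟩
      refine ⟨C', hC', φ, hφ, mem_terrOn_succ A |>.2 ⟨?_, ⟨φ u, hφu, ?_⟩, ?_⟩,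
        fun j hj => hfree j (hwindow j hj)⟩
      · exact mem_union_right _ (mem_biUnion.2 ⟨C', hC', hφv⟩)
      · exact hφ.map_adj u (hcomp ▸ mem_weakComponent_self A huS) v
          (mem_weakComponent_self A hvS) huv
      · exact disjoint_left.1 (hfree _ (hwindow _ hi)) hφv

lemma tracked_of_mem_terrOn_univ {k w : ℕ} (hsel : IsKernelSelection A X (k * w + 1) Keep)
    (hacyc : AcyclicOn A (univ \ X))
    (hsize : ∀ v ∈ univ \ X, (weakComponent A (univ \ X) v).card ≤ w) (hW : UsesAtMost W k)
    (i : ℕ) {v : V} (hv : v ∈ terrOn A univ W i) : Tracked A X Keep W i v := by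
  induction i generalizing v with
  | zero =>
    have hvW := ((mem_terrOn_zero A).1 hv).2
    exact ⟨fun hvK => (mem_terrOn_zero A).2 ⟨hvK, hvW⟩, fun hvK =>
      shadows_of_enter hsel hsize hW hvK fun y hyK hyW _ => (mem_terrOn_zero A).2 ⟨hyK, hyW⟩⟩
  | succ i ih =>
    obtain ⟨-, ⟨u, hu, huv⟩, hvW⟩ := (mem_terrOn_succ A).1 hv
    exact tracked_succ hsel hacyc hsize hW (ih hu) huv hvW

lemma terrOn_univ_eq_empty_of_kernel {k w : ℕ} (hsel : IsKernelSelection A X (k * w + 1) Keep)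
    (hacyc : AcyclicOn A (univ \ X))
    (hsize : ∀ v ∈ univ \ X, (weakComponent A (univ \ X) v).card ≤ w) (hW : UsesAtMost W k)
    {t : ℕ} (ht : terrOn A (X ∪ Keep.biUnion id) W t = ∅) : terrOn A univ W t = ∅ := by
  refine eq_empty_of_forall_notMem fun v hv => ?_
  have htracked := tracked_of_mem_terrOn_univ hsel hacyc hsize hW t hv
  by_cases hvK : v ∈ X ∪ Keep.biUnion id
  · simpa [ht] using htracked.1 hvK
  · obtain ⟨-, -, φ, -, hφv, -⟩ := htracked.2 hvK
    simp [ht] at hφv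

end

theorem copNumber_le_iff_kernel_general {V : Type} [Fintype V] [DecidableEq V]
    (A : V → V → Prop) (k w : ℕ) (X : Finset V)
    (hacyc : AcyclicOn A (Finset.univ \ X))
    (hsize : ∀ v ∈ Finset.univ \ X, (weakComponent A (Finset.univ \ X) v).card ≤ w)
    (Keep : Finset (Finset V))
    (hKeepSub : Keep ⊆ (Finset.univ \ X).image (weakComponent A (Finset.univ \ X)))
    (hcount : ∀ C ∈ (Finset.univ \ X).image (weakComponent A (Finset.univ \ X)),
      (Keep.filter (fun C' => ComponentEquiv A X C C')).card =
        min ((((Finset.univ \ X).image (weakComponent A (Finset.univ \ X))).filter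
              (fun C' => ComponentEquiv A X C C')).card)
            (k * w + 1)) :
    copNumberOn A Finset.univ ≤ k ↔ copNumberOn A (X ∪ Keep.biUnion id) ≤ k := by
  refine ⟨(copNumberOn_mono A (subset_univ _)).trans, fun h => ?_⟩
  obtain ⟨W, hW, t, ht⟩ := (copNumberOn_le_iff A).1 h
  exact (copNumberOn_le_iff A).2
    ⟨W, hW, t, terrOn_univ_eq_empty_of_kernel ⟨hKeepSub, hcount⟩ hacyc hsize hW ht⟩

/-- Kernelization: let `X` be a set whose deletion leaves an acyclic digraph whose
weak components have at most `w` vertices, and let `D'` be the subdigraph induced by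
`X` together with a choice `Keep` of components containing, from each equivalence
class, all its components if the class has at most `kw+1` elements and exactly
`kw + 1` of them otherwise.  Then `cn(D) ≤ k` iff `cn(D') ≤ k`. -/
theorem copNumber_le_iff_kernel {V : Type} [Fintype V] [DecidableEq V]
    (A : V → V → Prop) (k w : ℕ) (hk : 1 ≤ k) (hw : 1 ≤ w) (X : Finset V)
    (hacyc : AcyclicOn A (Finset.univ \ X))
    (hsize : ∀ v ∈ Finset.univ \ X, (weakComponent A (Finset.univ \ X) v).card ≤ w)
    (Keep : Finset (Finset V))
    (hKeepSub : Keep ⊆ (Finset.univ \ X).image (weakComponent A (Finset.univ \ X)))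
    (hcount : ∀ C ∈ (Finset.univ \ X).image (weakComponent A (Finset.univ \ X)),
      (Keep.filter (fun C' => ComponentEquiv A X C C')).card =
        min ((((Finset.univ \ X).image (weakComponent A (Finset.univ \ X))).filter
              (fun C' => ComponentEquiv A X C C')).card)
            (k * w + 1)) :
    copNumberOn A Finset.univ ≤ k ↔ copNumberOn A (X ∪ Keep.biUnion id) ≤ k :=
  copNumber_le_iff_kernel_general A k w X hacyc hsize Keep hKeepSub hcount
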